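/- Let K be a field with a non-archimedean absolute value, f(z) = z^d + b_{d-1}z^{d-1} + ... + b_0 ∈ K[z] with d ≥ 2, a ∈ K*, φ(x,y) = (ay, x + f(y)), and C_f = max over 0 ≤ i < d of max(|b_i|^{1/(d-i)}, 1). If P = (x₀,y₀) ∈ K² and no iterate φ^N(P) (N ≥ 0) lies in B⁺ = {(x,y) : |y| > max(|x|^{1/d}, C_f, |a|^{1/(d-1)})}, then writing φ^N(P) = (x_N, y_N), we have for all N ≥ 1: |y_N| ≤ max(|y₀|,1)^{1/d^N} · C_f^{d/(d-1)} · max(|a|^{1/(d-1)},1)^{d/(d-1)}. In particular, lim_{N→∞} d^{-N} log⁺ |y_N| = 0. -/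
import Mathlib


open Polynomial Filter

/-- if no forward iterate of `P` under the Hénon map enters the escape
region `B⁺`, then `|y_N|` is bounded explicitly and `d^{-N} log⁺|y_N| → 0`. -/
theorem stmt1 {K : Type*} [Field K] (v : AbsoluteValue K ℝ)
    (hna : IsNonarchimedean v) (d : ℕ) (hd : 2 ≤ d)
    (f : K[X]) (hmonic : f.Monic) (hdeg : f.natDegree = d)
    (a : K) (ha : a ≠ 0)
    (φ : K × K → K × K) (hφ : ∀ P, φ P = (a * P.2, P.1 + f.eval P.2))
    (Cf : ℝ)
    (hCf : Cf = (Finset.range d).sup' (Finset.nonempty_range_iff.mpr (by omega))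
      (fun i => max ((v (f.coeff i)) ^ ((1 : ℝ) / ((d : ℝ) - (i : ℝ)))) 1))
    (Bplus : Set (K × K))
    (hB : Bplus = {P : K × K | v P.2 > max ((v P.1) ^ ((1 : ℝ) / (d : ℝ)))
      (max Cf ((v a) ^ ((1 : ℝ) / ((d : ℝ) - 1))))})
    (P : K × K) (hout : ∀ N : ℕ, φ^[N] P ∉ Bplus) :
    (∀ N : ℕ, 1 ≤ N →
      v (φ^[N] P).2 ≤ (max (v P.2) 1) ^ ((1 : ℝ) / (d : ℝ) ^ N)
        * Cf ^ ((d : ℝ) / ((d : ℝ) - 1))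
        * (max ((v a) ^ ((1 : ℝ) / ((d : ℝ) - 1))) 1) ^ ((d : ℝ) / ((d : ℝ) - 1))) ∧
    Tendsto (fun N : ℕ => ((d : ℝ)⁻¹) ^ N * Real.log (max (v (φ^[N] P).2) 1))
      atTop (nhds 0) := by
  have hd1 : (1 : ℝ) < (d : ℝ) := by exact_mod_cast lt_of_lt_of_le one_lt_two hd
  have hd0 : (0 : ℝ) < (d : ℝ) := by linarith
  have hdm1 : (0 : ℝ) < (d : ℝ) - 1 := by linarith
  set A' : ℝ := (v a) ^ ((1 : ℝ) / ((d : ℝ) - 1)) with hA'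
  set A : ℝ := max A' 1 with hA
  have hva : 0 < v a := v.pos ha
  have hA'0 : 0 < A' := Real.rpow_pos_of_pos hva _
  have hA1 : (1 : ℝ) ≤ A := le_max_right _ _
  have hCf1 : (1 : ℝ) ≤ Cf := by
    rw [hCf]
    have h0 : (0 : ℕ) ∈ Finset.range d := Finset.mem_range.mpr (by omega)
    refine le_trans (le_max_right (v (f.coeff 0) ^ ((1 : ℝ) / ((d : ℝ) - ((0:ℕ) : ℝ)))) 1) ?_
    exact Finset.le_sup'
      (fun i => max ((v (f.coeff i)) ^ ((1 : ℝ) / ((d : ℝ) - (i : ℝ)))) 1) h0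
  set C : ℝ := max Cf A with hC
  have hC1 : (1 : ℝ) ≤ C := le_trans hCf1 (le_max_left _ _)
  have hC0 : (0 : ℝ) < C := lt_of_lt_of_le one_pos hC1
  set t : ℕ → ℝ := fun N => max (v ((φ^[N] P).2)) 1 with ht
  have ht1 : ∀ N, 1 ≤ t N := fun N => le_max_right _ _
  have ht0 : ∀ N, 0 < t N := fun N => lt_of_lt_of_le one_pos (ht1 N)
  set e : ℝ := (d : ℝ) / ((d : ℝ) - 1) with he
  have he0 : (0 : ℝ) ≤ e := le_of_lt (div_pos hd0 hdm1)
  -- the key recursion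
  have hrec : ∀ N : ℕ, t (N + 1) ≤ C * (t N) ^ ((1 : ℝ) / (d : ℝ)) := by
    intro N
    have hpow1 : (1 : ℝ) ≤ (t N) ^ ((1 : ℝ) / (d : ℝ)) :=
      Real.one_le_rpow (ht1 N) (by positivity)
    have hC' : C ≤ C * (t N) ^ ((1 : ℝ) / (d : ℝ)) :=
      le_mul_of_one_le_right (le_of_lt hC0) hpow1
    have hne : v ((φ^[N+1] P).2) ≤ max ((v ((φ^[N+1] P).1)) ^ ((1 : ℝ) / (d : ℝ)))
        (max Cf A') := by
      have h := hout (N + 1)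
      rw [hB] at h
      simp only [Set.mem_setOf_eq, not_lt] at h
      exact h
    have hxa : v ((φ^[N+1] P).1) = v a * v ((φ^[N] P).2) := by
      rw [Function.iterate_succ_apply', hφ, v.map_mul]
    have hvaC : v a ≤ C ^ ((d : ℝ) - 1) := by
      have h1 : A' ≤ C := le_trans (le_max_left _ _) (le_max_right Cf A)
      have h2 : A' ^ ((d : ℝ) - 1) ≤ C ^ ((d : ℝ) - 1) :=
        Real.rpow_le_rpow (le_of_lt hA'0) h1 (le_of_lt hdm1)
      have h3 : A' ^ ((d : ℝ) - 1) = v a := by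
        rw [hA', ← Real.rpow_mul (le_of_lt hva),
          one_div_mul_cancel (ne_of_gt hdm1), Real.rpow_one]
      linarith
    refine max_le (le_trans hne (max_le ?_ ?_)) (le_trans hC1 hC')
    · -- (v x_{N+1})^{1/d} ≤ C * t N ^ {1/d}
      rw [hxa]
      have hle : v a * v ((φ^[N] P).2) ≤ C ^ ((d : ℝ) - 1) * t N :=
        mul_le_mul hvaC (le_max_left _ _) (v.nonneg _) (by positivity)
      calc (v a * v ((φ^[N] P).2)) ^ ((1 : ℝ) / (d : ℝ))
          ≤ (C ^ ((d : ℝ) - 1) * t N) ^ ((1 : ℝ) / (d : ℝ)) := by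
            apply Real.rpow_le_rpow (by positivity) hle (by positivity)
        _ = (C ^ ((d : ℝ) - 1)) ^ ((1 : ℝ) / (d : ℝ)) * (t N) ^ ((1 : ℝ) / (d : ℝ)) :=
            Real.mul_rpow (by positivity) (by positivity)
        _ ≤ C * (t N) ^ ((1 : ℝ) / (d : ℝ)) := by
            apply mul_le_mul_of_nonneg_right _ (by positivity)
            rw [← Real.rpow_mul (le_of_lt hC0)]
            calc C ^ (((d : ℝ) - 1) * (1 / (d : ℝ)))
                ≤ C ^ (1 : ℝ) := by
                  apply Real.rpow_le_rpow_of_exponent_le hC1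
                  rw [mul_one_div, div_le_one hd0]; linarith
              _ = C := Real.rpow_one C
    · -- max Cf A' ≤ C ≤ ...
      refine le_trans (max_le (le_max_left _ _) ?_) hC'
      exact le_trans (le_max_left _ _) (le_max_right Cf A)
  -- the main bound, for all N
  have hbound : ∀ N : ℕ, t N ≤ (t 0) ^ ((1 : ℝ) / (d : ℝ) ^ N) * C ^ e := by
    intro N
    induction N with
    | zero =>
      simp only [pow_zero, div_one, Real.rpow_one]
      exact le_mul_of_one_le_right (le_of_lt (ht0 0)) (Real.one_le_rpow hC1 he0)
    | succ N ih =>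
      calc t (N + 1) ≤ C * (t N) ^ ((1 : ℝ) / (d : ℝ)) := hrec N
        _ ≤ C * ((t 0) ^ ((1 : ℝ) / (d : ℝ) ^ N) * C ^ e) ^ ((1 : ℝ) / (d : ℝ)) := by
            apply mul_le_mul_of_nonneg_left _ (le_of_lt hC0)
            exact Real.rpow_le_rpow (by positivity) ih (by positivity)
        _ = (t 0) ^ ((1 : ℝ) / (d : ℝ) ^ (N + 1)) * C ^ e := by
            rw [Real.mul_rpow (by positivity) (by positivity),
              ← Real.rpow_mul (le_of_lt (ht0 0)), ← Real.rpow_mul (le_of_lt hC0)]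
            have e1 : (1 : ℝ) / (d : ℝ) ^ N * (1 / (d : ℝ)) = 1 / (d : ℝ) ^ (N + 1) := by
              rw [pow_succ]; field_simp
            have e2 : C * C ^ (e * (1 / (d : ℝ))) = C ^ e := by
              have h1 : e * (1 / (d : ℝ)) = 1 / ((d : ℝ) - 1) := by
                rw [he]; field_simp; try ring
              have h2 : e = 1 + 1 / ((d : ℝ) - 1) := by
                rw [he]; field_simp; try ring
              rw [h1, h2, Real.rpow_add hC0, Real.rpow_one]
            rw [e1, mul_left_comm, e2]
  -- C ≤ Cf * A, hence C ^ e ≤ Cf ^ e * A ^ e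
  have hCe : C ^ e ≤ Cf ^ e * A ^ e := by
    have h1 : C ≤ Cf * A :=
      max_le (le_mul_of_one_le_right (by linarith) hA1)
        (le_mul_of_one_le_left (by linarith) hCf1)
    calc C ^ e ≤ (Cf * A) ^ e := Real.rpow_le_rpow (le_of_lt hC0) h1 he0
      _ = Cf ^ e * A ^ e := Real.mul_rpow (by linarith) (by linarith)
  have ht00 : t 0 = max (v P.2) 1 := by simp [ht]
  constructor
  · intro N _hN
    have h1 : v ((φ^[N] P).2) ≤ t N := le_max_left _ _
    have h2 := hbound N
    have h3 : (t 0) ^ ((1 : ℝ) / (d : ℝ) ^ N) * C ^ e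
        ≤ (t 0) ^ ((1 : ℝ) / (d : ℝ) ^ N) * (Cf ^ e * A ^ e) :=
      mul_le_mul_of_nonneg_left hCe (by positivity)
    calc v ((φ^[N] P).2) ≤ (t 0) ^ ((1 : ℝ) / (d : ℝ) ^ N) * (Cf ^ e * A ^ e) := by
          linarith
      _ = (max (v P.2) 1) ^ ((1 : ℝ) / (d : ℝ) ^ N) * Cf ^ e * A ^ e := by
          rw [ht00, mul_assoc]
  · -- squeeze
    set B' : ℝ := t 0 * C ^ e with hB'
    have hB'1 : (1 : ℝ) ≤ B' :=
      one_le_mul_of_one_le_of_one_le (ht1 0) (Real.one_le_rpow hC1 he0)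
    have hlo : ∀ N : ℕ, (0 : ℝ) ≤ ((d : ℝ)⁻¹) ^ N * Real.log (t N) := by
      intro N
      have := Real.log_nonneg (ht1 N)
      positivity
    have hup : ∀ N : ℕ, ((d : ℝ)⁻¹) ^ N * Real.log (t N)
        ≤ ((d : ℝ)⁻¹) ^ N * Real.log B' := by
      intro N
      apply mul_le_mul_of_nonneg_left _ (by positivity)
      apply Real.log_le_log (ht0 N)
      refine le_trans (hbound N) ?_
      apply mul_le_mul_of_nonneg_right _ (by positivity)
      calc (t 0) ^ ((1 : ℝ) / (d : ℝ) ^ N) ≤ (t 0) ^ (1 : ℝ) := by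
            apply Real.rpow_le_rpow_of_exponent_le (ht1 0)
            rw [div_le_one (by positivity)]
            exact_mod_cast Nat.one_le_iff_ne_zero.mpr (pow_ne_zero N (by omega))
        _ = t 0 := Real.rpow_one _
    have hupT : Tendsto (fun N : ℕ => ((d : ℝ)⁻¹) ^ N * Real.log B') atTop (nhds 0) := by
      have hgeo : Tendsto (fun N : ℕ => ((d : ℝ)⁻¹) ^ N) atTop (nhds 0) := by
        apply tendsto_pow_atTop_nhds_zero_of_lt_one (by positivity)
        exact inv_lt_one_of_one_lt₀ hd1
      simpa using hgeo.mul_const (Real.log B')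
    exact tendsto_of_tendsto_of_tendsto_of_le_of_le tendsto_const_nhds hupT hlo hup
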